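/- F2 is atomless conditionally to F1 if and only if there exists a sub-σ-algebra B ⊆ F2 that is independent of F1 and atomless for P, i.e., for every set G ∈ B with P[G] > 0 there exists H ∈ B with H ⊆ G and 0 < P[H] < P[G]. -/

import Mathlib

open MeasureTheory ProbabilityTheory Set
open scoped ENNReal

/-- The conditional expectation (under `P`, defined on `F2`) of the indicator of `A`
given the sub-σ-algebra `F1`. -/
noncomputable def cexpInd {Ω : Type*} (F1 F2 : MeasurableSpace Ω) (P : @Measure Ω F2)
    (A : Set Ω) : Ω → ℝ :=
  P[A.indicator (fun _ => (1 : ℝ)) | F1]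

/-- `F2` is atomless conditionally to `F1`: for every `A ∈ F2` there is `B ∈ F2`, `B ⊆ A`,
with `0 < E[1_B | F1] < E[1_A | F1]` almost surely on the set `{E[1_A | F1] > 0}`. -/
def CondAtomless {Ω : Type*} (F1 F2 : MeasurableSpace Ω) (P : @Measure Ω F2) : Prop :=
  ∀ A : Set Ω, MeasurableSet[F2] A → ∃ B : Set Ω, MeasurableSet[F2] B ∧ B ⊆ A ∧
    ∀ᵐ ω ∂P, 0 < cexpInd F1 F2 P A ω →
      0 < cexpInd F1 F2 P B ω ∧ cexpInd F1 F2 P B ω < cexpInd F1 F2 P A ω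

/-!
Forward direction: conditional atomlessness allows one to halve any set conditionally on `F1`; a
greedy exhaustion produces `H ⊆ A` with `E[1_H | F1] = E[1_A | F1] / 2`. Halving `Ω` over and over
gives a binary tree of cells whose cells of depth `n` have conditional probability `2⁻ⁿ`. They are
therefore independent of `F1`, and the σ-algebra they generate is atomless because the cells of
depth `n` cover `Ω` and have measure `2⁻ⁿ`.

Converse: an atomless `B` covers `Ω`, up to a null set, by countably many `B`-sets of measure at
most `2⁻ᴺ`. For such a cell `C`, `E[1_{A ∩ C} | F1]` fails to lie strictly between `0` and
`E[1_A | F1]` only where it is `0` or `E[1_A | F1]`; by independence, the region where this happens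
for every cell of the cover meets `A` in measure at most `2⁻ᴺ`. Letting `N → ∞`, the cells work
almost everywhere on `{E[1_A | F1] > 0}`, and gluing them along the `F1`-measurable regions where
they work gives the required subset of `A`.
-/

open Filter
open scoped Topology

section Greedy

variable {α : Type*} {m : MeasurableSpace α} (μ : Measure α) [IsFiniteMeasure μ]

lemma tendsto_measure_iUnion_sdiff {U : ℕ → Set α} (hU : ∀ n, MeasurableSet (U n))
    (hmono : Monotone U) : Tendsto (fun n => μ ((⋃ k, U k) \ U n)) atTop (𝓝 0) := by
  have h := tendsto_measure_iInter_atTop (μ := μ) (s := fun n => (⋃ k, U k) \ U n)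
    (fun n => ((MeasurableSet.iUnion hU).diff (hU n)).nullMeasurableSet)
    (fun m n hmn => sdiff_subset_sdiff_right (hmono hmn)) ⟨0, measure_ne_top _ _⟩
  rwa [← sdiff_iUnion, sdiff_self, measure_empty] at h

lemma exists_forall_measure_le_two_mul {p : Set α → Prop} (hp : p ∅) :
    ∃ C, p C ∧ ∀ D, p D → μ D ≤ 2 * μ C := by
  set s := ⨆ D : {D // p D}, μ D
  by_cases hs : s = 0
  · refine ⟨∅, hp, fun D hD => ?_⟩
    exact ((le_iSup (fun D : {D // p D} => μ D) ⟨D, hD⟩).trans_eq hs).trans zero_le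
  have hs_top : s ≠ ⊤ := ne_top_of_le_ne_top (measure_ne_top μ univ)
    (iSup_le fun D => measure_mono (subset_univ _))
  obtain ⟨⟨C, hC⟩, hlt⟩ := lt_iSup_iff.1 (ENNReal.half_lt_self hs hs_top)
  refine ⟨C, hC, fun D hD => ?_⟩
  calc μ D ≤ s := le_iSup (fun D : {D // p D} => μ D) ⟨D, hD⟩
    _ = 2 * (s / 2) := (ENNReal.mul_div_cancel two_ne_zero ENNReal.ofNat_ne_top).symm
    _ ≤ 2 * μ C := by gcongr

/-- Greedy exhaustion: starting from `∅`, repeatedly add an admissible set of at least half the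
largest possible measure. The added sets are disjoint, so their measures tend to zero, and hence
no admissible set of positive measure survives in the limit. -/
theorem exists_seq_greedy (Inv : Set α → Prop) (Adm : Set α → Set α → Prop)
    (inv_empty : Inv ∅) (adm_empty : ∀ U, Inv U → Adm U ∅)
    (inv_union : ∀ U C, Inv U → Adm U C → Inv (U ∪ C))
    (inv_iUnion : ∀ U : ℕ → Set α, Monotone U → (∀ n, Inv (U n)) → Inv (⋃ n, U n))
    (measurableSet_of_adm : ∀ U C, Adm U C → MeasurableSet C)
    (disjoint_of_adm : ∀ U C, Adm U C → Disjoint U C)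
    (adm_anti : ∀ U V C, Inv U → Inv V → U ⊆ V → Adm V C → Adm U C) :
    ∃ C : ℕ → Set α, (∀ n, ∃ U, Adm U (C n)) ∧ Inv (⋃ n, C n) ∧
      ∀ D, Adm (⋃ n, C n) D → μ D = 0 := by
  choose f hf_adm hf_max using fun U : {U // Inv U} =>
    exists_forall_measure_le_two_mul μ (adm_empty U.1 U.2)
  let seq : ℕ → {U // Inv U} := fun n =>
    Nat.rec ⟨∅, inv_empty⟩ (fun _ U => ⟨U.1 ∪ f U, inv_union _ _ U.2 (hf_adm U)⟩) n
  set U : ℕ → Set α := fun n => (seq n).1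
  set C : ℕ → Set α := fun n => f (seq n)
  have hU_succ : ∀ n, U (n + 1) = U n ∪ C n := fun n => rfl
  have hU_mono : Monotone U := monotone_nat_of_le_succ fun n => by simp [hU_succ]
  have hC_sub : ∀ n, C n ⊆ U (n + 1) := fun n => by simp [hU_succ]
  have hU_eq : ⋃ n, U n = ⋃ n, C n := by
    refine subset_antisymm (iUnion_subset fun n => ?_) (iUnion_mono' fun n => ⟨n + 1, hC_sub n⟩)
    induction n with
    | zero => exact empty_subset _
    | succ n ih => exact union_subset ih (subset_iUnion C n)
  have hC_disj : Pairwise (Function.onFun Disjoint C) := by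
    refine pairwise_disjoint_on C |>.2 fun m n hmn => ?_
    exact (disjoint_of_adm _ _ (hf_adm (seq n))).mono_left ((hC_sub m).trans (hU_mono hmn))
  have hInv : Inv (⋃ n, C n) := hU_eq ▸ inv_iUnion U hU_mono fun n => (seq n).2
  refine ⟨C, fun n => ⟨_, hf_adm (seq n)⟩, hInv, fun D hD => ?_⟩
  have hD_le : ∀ n, μ D ≤ 2 * μ (C n) := fun n =>
    hf_max _ D (adm_anti _ _ _ (seq n).2 hInv (hU_eq ▸ subset_iUnion U n) hD)
  have hC_tsum : ∑' n, μ (C n) ≠ ⊤ := by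
    rw [← measure_iUnion hC_disj fun n => measurableSet_of_adm _ _ (hf_adm (seq n))]
    exact measure_ne_top μ _
  have hlim := ENNReal.Tendsto.const_mul (a := 2)
    (ENNReal.tendsto_atTop_zero_of_tsum_ne_top hC_tsum) (Or.inr ENNReal.ofNat_ne_top)
  rw [mul_zero] at hlim
  exact le_antisymm (ge_of_tendsto' hlim hD_le) zero_le

end Greedy

section SplitTree

variable {α : Type*} (h : Set α → Set α)

def splitTree : List Bool → Set α
  | [] => univ
  | b :: s => if b then splitTree s \ h (splitTree s) else splitTree s ∩ h (splitTree s)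

variable {h}

lemma splitTree_cons_subset (b : Bool) (s : List Bool) :
    splitTree h (b :: s) ⊆ splitTree h s := by
  cases b
  · exact inter_subset_left
  · exact sdiff_subset

lemma splitTree_subset_of_suffix {s t : List Bool} (hst : s <:+ t) :
    splitTree h t ⊆ splitTree h s := by
  obtain ⟨u, rfl⟩ := hst
  induction u with
  | nil => exact subset_rfl
  | cons b u ih => exact (splitTree_cons_subset b _).trans ih

lemma disjoint_splitTree {s t : List Bool} (hlen : s.length = t.length) (hst : s ≠ t) :
    Disjoint (splitTree h s) (splitTree h t) := by
  induction s generalizing t with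
  | nil => exact absurd (List.length_eq_zero_iff.1 hlen.symm).symm hst
  | cons b s ih =>
    obtain _ | ⟨c, t⟩ := t
    · simp at hlen
    by_cases hs : s = t
    · subst hs
      have hbc : b ≠ c := by rintro rfl; exact hst rfl
      cases b <;> cases c <;> simp only [ne_eq, not_true_eq_false] at hbc
      · exact disjoint_sdiff_inter.symm
      · exact disjoint_sdiff_inter
    · exact (ih (Nat.succ_injective hlen) hs).mono (splitTree_cons_subset b s)
        (splitTree_cons_subset c t)

lemma splitTree_subset_or_disjoint {s t : List Bool} (hlen : s.length ≤ t.length) :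
    splitTree h t ⊆ splitTree h s ∨ Disjoint (splitTree h s) (splitTree h t) := by
  set t' := t.drop (t.length - s.length)
  have ht' : splitTree h t ⊆ splitTree h t' := splitTree_subset_of_suffix (List.drop_suffix _ _)
  by_cases hst : s = t'
  · exact .inl (hst ▸ ht')
  · refine .inr ((disjoint_splitTree ?_ hst).mono_right ht')
    rw [List.length_drop]
    omega

lemma isPiSystem_range_splitTree : IsPiSystem (range (splitTree h)) := by
  rintro _ ⟨s, rfl⟩ _ ⟨t, rfl⟩ hne
  rcases le_total s.length t.length with hlen | hlen
  · obtain hts | hdisj := splitTree_subset_or_disjoint (h := h) hlen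
    · exact ⟨t, (inter_eq_right.2 hts).symm⟩
    · exact absurd hdisj (not_disjoint_iff_nonempty_inter.2 hne)
  · obtain hst | hdisj := splitTree_subset_or_disjoint (h := h) hlen
    · exact ⟨s, (inter_eq_left.2 hst).symm⟩
    · exact absurd hdisj.symm (not_disjoint_iff_nonempty_inter.2 hne)

lemma exists_mem_splitTree (n : ℕ) (x : α) : ∃ s : List Bool, s.length = n ∧ x ∈ splitTree h s := by
  induction n with
  | zero => exact ⟨[], rfl, mem_univ x⟩
  | succ n ih =>
    obtain ⟨s, rfl, hx⟩ := ih
    by_cases hxh : x ∈ h (splitTree h s)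
    · exact ⟨false :: s, rfl, hx, hxh⟩
    · exact ⟨true :: s, rfl, hx, hxh⟩

end SplitTree

def AtomlessOn {Ω : Type*} {m0 : MeasurableSpace Ω} (B : MeasurableSpace Ω) (P : @Measure Ω m0) :
    Prop :=
  ∀ G, MeasurableSet[B] G → 0 < P G → ∃ H, MeasurableSet[B] H ∧ H ⊆ G ∧ 0 < P H ∧ P H < P G

namespace AtomlessOn

variable {Ω : Type*} {m0 B : MeasurableSpace Ω} {P : @Measure Ω m0} {G : Set Ω}

lemma exists_subset_measure_le_half [IsFiniteMeasure P] (hB : B ≤ m0) (hP : AtomlessOn B P)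
    (hG : MeasurableSet[B] G) (hG_pos : 0 < P G) :
    ∃ H, MeasurableSet[B] H ∧ H ⊆ G ∧ 0 < P H ∧ P H ≤ P G / 2 := by
  obtain ⟨H, hH, hHG, hH_pos, hH_lt⟩ := hP G hG hG_pos
  have hsum : P H + P (G \ H) = P G := by
    rw [measure_add_sdiff (hB _ hH).nullMeasurableSet, union_eq_self_of_subset_left hHG]
  rcases le_total (P H) (P (G \ H)) with hle | hle
  · refine ⟨H, hH, hHG, hH_pos, ?_⟩
    rw [ENNReal.le_div_iff_mul_le (.inl two_ne_zero) (.inl ENNReal.ofNat_ne_top), ← hsum, mul_two]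
    gcongr
  · refine ⟨G \ H, hG.diff hH, sdiff_subset, ?_, ?_⟩
    · rw [measure_sdiff hHG (hB _ hH).nullMeasurableSet (measure_ne_top P H)]
      exact tsub_pos_of_lt hH_lt
    · rw [ENNReal.le_div_iff_mul_le (.inl two_ne_zero) (.inl ENNReal.ofNat_ne_top), ← hsum,
        mul_two]
      gcongr

lemma exists_subset_measure_le_pow [IsFiniteMeasure P] (hB : B ≤ m0) (hP : AtomlessOn B P)
    (hG : MeasurableSet[B] G) (hG_pos : 0 < P G) (n : ℕ) :
    ∃ H, MeasurableSet[B] H ∧ H ⊆ G ∧ 0 < P H ∧ P H ≤ 2⁻¹ ^ n * P G := by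
  induction n with
  | zero => exact ⟨G, hG, subset_rfl, hG_pos, by simp⟩
  | succ n ih =>
    obtain ⟨H₁, hH₁, hH₁G, hH₁_pos, hH₁_le⟩ := ih
    obtain ⟨H₂, hH₂, hH₂H₁, hH₂_pos, hH₂_le⟩ := hP.exists_subset_measure_le_half hB hH₁ hH₁_pos
    refine ⟨H₂, hH₂, hH₂H₁.trans hH₁G, hH₂_pos, ?_⟩
    calc P H₂ ≤ P H₁ / 2 := hH₂_le
      _ = 2⁻¹ * P H₁ := by rw [ENNReal.div_eq_inv_mul]
      _ ≤ 2⁻¹ * (2⁻¹ ^ n * P G) := by gcongr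
      _ = 2⁻¹ ^ (n + 1) * P G := by rw [pow_succ', mul_assoc]

lemma exists_cover_measure_le [IsProbabilityMeasure P] (hB : B ≤ m0) (hP : AtomlessOn B P)
    {ε : ℝ≥0∞} (hε : ε ≠ 0) :
    ∃ C : ℕ → Set Ω, (∀ k, MeasurableSet[B] (C k) ∧ P (C k) ≤ ε) ∧ P (⋃ k, C k)ᶜ = 0 := by
  obtain ⟨C, hC_adm, -, hmax⟩ := exists_seq_greedy P (fun _ => True)
    (fun U C => MeasurableSet[B] C ∧ Disjoint U C ∧ P C ≤ ε) trivial
    (fun _ _ => ⟨.empty, disjoint_empty _, by simp⟩) (fun _ _ _ _ => trivial)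
    (fun _ _ _ => trivial) (fun _ _ h => hB _ h.1) (fun _ _ h => h.2.1)
    (fun _ _ _ _ _ hUV h => ⟨h.1, h.2.1.mono_left hUV, h.2.2⟩)
  have hC : ∀ k, MeasurableSet[B] (C k) ∧ P (C k) ≤ ε := fun k =>
    have ⟨_, hCk, _, hCk_le⟩ := hC_adm k
    ⟨hCk, hCk_le⟩
  refine ⟨C, hC, ?_⟩
  by_contra hpos
  have hCc : MeasurableSet[B] (⋃ k, C k)ᶜ := (MeasurableSet.iUnion fun k => (hC k).1).compl
  obtain ⟨n, hn⟩ := ENNReal.exists_inv_two_pow_lt hε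
  obtain ⟨H, hH, hHC, hH_pos, hH_le⟩ :=
    hP.exists_subset_measure_le_pow hB hCc (pos_iff_ne_zero.2 hpos) n
  refine hH_pos.ne' (hmax H ⟨hH, disjoint_compl_right.mono_right hHC, ?_⟩)
  calc P H ≤ 2⁻¹ ^ n * P (⋃ k, C k)ᶜ := hH_le
    _ ≤ 2⁻¹ ^ n * 1 := by gcongr; exact prob_le_one
    _ ≤ ε := by rw [mul_one]; exact hn.le

end AtomlessOn

lemma atomlessOn_generateFrom_splitTree {Ω : Type*} {m0 : MeasurableSpace Ω} {P : Measure Ω}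
    {h : Set Ω → Set Ω} (hP : ∀ s, P (splitTree h s) ≤ 2⁻¹ ^ s.length) :
    AtomlessOn (MeasurableSpace.generateFrom (range (splitTree h))) P := by
  intro G hG hG_pos
  obtain ⟨n, hn⟩ := ENNReal.exists_inv_two_pow_lt hG_pos.ne'
  have hcover : G ⊆ ⋃ s ∈ {s : List Bool | s.length = n}, G ∩ splitTree h s := fun x hx =>
    have ⟨s, hs, hxs⟩ := exists_mem_splitTree n x
    mem_biUnion hs ⟨hx, hxs⟩
  obtain ⟨s, hs, hGs⟩ : ∃ s : List Bool, s.length = n ∧ P (G ∩ splitTree h s) ≠ 0 := by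
    by_contra! hnull
    exact hG_pos.ne' (measure_mono_null hcover
      ((measure_biUnion_null_iff (to_countable _)).2 hnull))
  refine ⟨G ∩ splitTree h s, hG.inter (MeasurableSpace.measurableSet_generateFrom ⟨s, rfl⟩),
    inter_subset_left, pos_iff_ne_zero.2 hGs, ?_⟩
  calc P (G ∩ splitTree h s) ≤ P (splitTree h s) := measure_mono inter_subset_right
    _ ≤ 2⁻¹ ^ n := hs ▸ hP s
    _ < P G := hn

section CexpInd

variable {Ω : Type*} {F1 F2 : MeasurableSpace Ω} {P : @Measure Ω F2} {A X Y F : Set Ω}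

lemma measurable_cexpInd : Measurable[F1] (cexpInd F1 F2 P A) :=
  stronglyMeasurable_condExp.measurable

lemma integrable_cexpInd : Integrable (cexpInd F1 F2 P A) P :=
  integrable_condExp

lemma cexpInd_nonneg : 0 ≤ᵐ[P] cexpInd F1 F2 P A :=
  condExp_nonneg (.of_forall fun _ => indicator_nonneg (fun _ _ => zero_le_one) _)

lemma cexpInd_empty : cexpInd F1 F2 P ∅ = 0 := by
  simp only [cexpInd, indicator_empty]
  exact condExp_zero

variable [IsFiniteMeasure P]

lemma integrable_indicator_one (hA : MeasurableSet[F2] A) :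
    Integrable (A.indicator fun _ => (1 : ℝ)) P :=
  (integrable_const 1).indicator hA

lemma cexpInd_univ (hle : F1 ≤ F2) : cexpInd F1 F2 P univ = 1 := by
  simp only [cexpInd, indicator_univ]
  exact condExp_const hle 1

lemma cexpInd_mono (hX : MeasurableSet[F2] X) (hY : MeasurableSet[F2] Y) (hXY : X ⊆ Y) :
    cexpInd F1 F2 P X ≤ᵐ[P] cexpInd F1 F2 P Y :=
  condExp_mono (integrable_indicator_one hX) (integrable_indicator_one hY)
    (.of_forall (indicator_le_indicator_of_subset hXY fun _ => zero_le_one))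

lemma cexpInd_le_one (hle : F1 ≤ F2) (hA : MeasurableSet[F2] A) :
    cexpInd F1 F2 P A ≤ᵐ[P] 1 := by
  simpa [cexpInd_univ hle] using cexpInd_mono (F1 := F1) (P := P) hA .univ (subset_univ A)

lemma cexpInd_union (hX : MeasurableSet[F2] X) (hY : MeasurableSet[F2] Y)
    (hXY : Disjoint X Y) :
    cexpInd F1 F2 P (X ∪ Y) =ᵐ[P] cexpInd F1 F2 P X + cexpInd F1 F2 P Y := by
  rw [cexpInd, indicator_union_of_disjoint hXY]
  exact condExp_add (integrable_indicator_one hX) (integrable_indicator_one hY) F1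

lemma cexpInd_diff (hX : MeasurableSet[F2] X) (hY : MeasurableSet[F2] Y) (hYX : Y ⊆ X) :
    cexpInd F1 F2 P (X \ Y) =ᵐ[P] cexpInd F1 F2 P X - cexpInd F1 F2 P Y := by
  have h := cexpInd_union (F1 := F1) (P := P) (hX.diff hY) hY disjoint_sdiff_left
  rw [sdiff_union_of_subset hYX] at h
  filter_upwards [h] with ω hω
  simp only [Pi.add_apply, Pi.sub_apply] at hω ⊢
  linarith

lemma cexpInd_inter (hA : MeasurableSet[F2] A) (hF : MeasurableSet[F1] F) :
    cexpInd F1 F2 P (A ∩ F) =ᵐ[P] F.indicator (cexpInd F1 F2 P A) := by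
  rw [cexpInd, inter_comm, ← indicator_indicator]
  exact condExp_indicator (integrable_indicator_one hA) hF

lemma cexpInd_eq_of_inter_eq (hX : MeasurableSet[F2] X) (hY : MeasurableSet[F2] Y)
    (hF : MeasurableSet[F1] F) (hXY : X ∩ F = Y ∩ F) :
    ∀ᵐ ω ∂P, ω ∈ F → cexpInd F1 F2 P X ω = cexpInd F1 F2 P Y ω := by
  filter_upwards [cexpInd_inter (P := P) hX hF, cexpInd_inter (P := P) hY hF] with ω hXω hYω hω
  rw [hXY, hYω, indicator_of_mem hω] at hXω
  rwa [indicator_of_mem hω, eq_comm] at hXω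

lemma setIntegral_cexpInd (hle : F1 ≤ F2) (hA : MeasurableSet[F2] A)
    (hF : MeasurableSet[F1] F) :
    ∫ ω in F, cexpInd F1 F2 P A ω ∂P = (P (A ∩ F)).toReal := by
  rw [cexpInd, setIntegral_condExp hle (integrable_indicator_one hA) hF,
    setIntegral_indicator hA, setIntegral_const, smul_eq_mul, mul_one, inter_comm,
    measureReal_def]

lemma measure_inter_eq_zero_iff_cexpInd (hle : F1 ≤ F2) (hA : MeasurableSet[F2] A)
    (hF : MeasurableSet[F1] F) :
    P (A ∩ F) = 0 ↔ ∀ᵐ ω ∂P, ω ∈ F → cexpInd F1 F2 P A ω = 0 := by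
  rw [← ae_restrict_iff' (hle _ hF), ← measureReal_eq_zero_iff, measureReal_def,
    ← setIntegral_cexpInd hle hA hF,
    setIntegral_eq_zero_iff_of_nonneg_ae (ae_restrict_of_ae cexpInd_nonneg)
      integrable_cexpInd.integrableOn]
  rfl

lemma measure_inter_le_of_cexpInd_le (hle : F1 ≤ F2) (hX : MeasurableSet[F2] X)
    (hY : MeasurableSet[F2] Y) (hF : MeasurableSet[F1] F)
    (h : ∀ᵐ ω ∂P, ω ∈ F → cexpInd F1 F2 P X ω ≤ cexpInd F1 F2 P Y ω) :
    P (X ∩ F) ≤ P (Y ∩ F) := by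
  rw [← ENNReal.toReal_le_toReal (measure_ne_top _ _) (measure_ne_top _ _),
    ← setIntegral_cexpInd hle hX hF, ← setIntegral_cexpInd hle hY hF]
  exact setIntegral_mono_on_ae integrable_cexpInd.integrableOn integrable_cexpInd.integrableOn
    (hle _ hF) h

lemma measure_inter_eq_of_cexpInd_eq_const (hle : F1 ≤ F2) (hX : MeasurableSet[F2] X) {c : ℝ}
    (hc : cexpInd F1 F2 P X =ᵐ[P] fun _ => c) (hF : MeasurableSet[F1] F) :
    P (X ∩ F) = ENNReal.ofReal c * P F := by
  have h := setIntegral_cexpInd (P := P) hle hX hF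
  rw [setIntegral_congr_ae (hle _ hF) (hc.mono fun ω hω _ => hω), setIntegral_const,
    smul_eq_mul, measureReal_def, mul_comm] at h
  rw [← ENNReal.ofReal_toReal (measure_ne_top P (X ∩ F)), ← h,
    ENNReal.ofReal_mul' ENNReal.toReal_nonneg, ENNReal.ofReal_toReal (measure_ne_top P F)]

/-- The positive part of `E[⋃ U] - c` is dominated by `E[⋃ U \ U n]`, whose integral tends
to zero. -/
lemma cexpInd_iUnion_le (hle : F1 ≤ F2) {U : ℕ → Set Ω} (hU : ∀ n, MeasurableSet[F2] (U n))
    (hmono : Monotone U) {c : Ω → ℝ} (hc : Integrable c P)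
    (h : ∀ n, cexpInd F1 F2 P (U n) ≤ᵐ[P] c) : cexpInd F1 F2 P (⋃ n, U n) ≤ᵐ[P] c := by
  set V := ⋃ n, U n
  have hV : MeasurableSet[F2] V := MeasurableSet.iUnion hU
  set g : Ω → ℝ := fun ω => max (cexpInd F1 F2 P V ω - c ω) 0
  have hg : Integrable g P := (integrable_cexpInd.sub hc).pos_part
  have hg_le : ∀ n, ∫ ω, g ω ∂P ≤ (P (V \ U n)).toReal := by
    intro n
    rw [← inter_univ (V \ U n), ← setIntegral_cexpInd hle (hV.diff (hU n)) MeasurableSet.univ,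
      setIntegral_univ]
    refine integral_mono_ae hg integrable_cexpInd ?_
    filter_upwards [cexpInd_diff (F1 := F1) (P := P) hV (hU n) (subset_iUnion U n), h n,
      cexpInd_nonneg (F1 := F1) (P := P) (A := V \ U n)] with ω hdiff hn hnonneg
    simp only [Pi.sub_apply] at hdiff
    exact max_le (by linarith) hnonneg
  have hg_zero : ∫ ω, g ω ∂P = 0 :=
    le_antisymm (ge_of_tendsto' ((ENNReal.tendsto_toReal ENNReal.zero_ne_top).comp
      (tendsto_measure_iUnion_sdiff P hU hmono)) hg_le) (integral_nonneg fun _ => le_max_right _ _)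
  filter_upwards [(integral_eq_zero_iff_of_nonneg (fun _ => le_max_right _ _) hg).1 hg_zero]
    with ω hω
  have : cexpInd F1 F2 P V ω - c ω ≤ 0 := by simpa [g] using hω
  linarith

end CexpInd

section HalvingFromCondAtomless

variable {Ω : Type*} {F1 F2 : MeasurableSpace Ω} {P : @Measure Ω F2} [IsFiniteMeasure P]
  {A C : Set Ω}

/-- Where the witness `D` of conditional atomlessness carries at most half of `E[1_C | F1]`
keep `D`, elsewhere take its complement `C \ D`. -/
lemma CondAtomless.exists_subset_cexpInd_le_half (hle : F1 ≤ F2) (hCA : CondAtomless F1 F2 P)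
    (hC : MeasurableSet[F2] C) :
    ∃ C', MeasurableSet[F2] C' ∧ C' ⊆ C ∧
      (∀ᵐ ω ∂P, cexpInd F1 F2 P C' ω ≤ cexpInd F1 F2 P C ω / 2) ∧
      (∀ᵐ ω ∂P, 0 < cexpInd F1 F2 P C ω → 0 < cexpInd F1 F2 P C' ω) := by
  obtain ⟨D, hD, hDC, hD_pos⟩ := hCA C hC
  set T := {ω | cexpInd F1 F2 P D ω ≤ cexpInd F1 F2 P C ω / 2}
  have hT : MeasurableSet[F1] T :=
    measurableSet_le measurable_cexpInd (measurable_cexpInd.div_const 2)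
  have hCD := hC.diff hD
  refine ⟨T.ite D (C \ D), (hle _ hT).ite hD hCD,
    (ite_subset_union _ _ _).trans (union_subset hDC sdiff_subset), ?_⟩
  have hon := cexpInd_eq_of_inter_eq (P := P) ((hle _ hT).ite hD hCD) hD hT (ite_inter_self _ _ _)
  have hoff := cexpInd_eq_of_inter_eq (P := P) ((hle _ hT).ite hD hCD) hCD hT.compl
    (ite_inter_compl_self _ _ _)
  have hdiff := cexpInd_diff (F1 := F1) (P := P) hC hD hDC
  constructor
  · filter_upwards [hon, hoff, hdiff] with ω hon hoff hdiff
    by_cases hω : ω ∈ T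
    · exact (hon hω).trans_le hω
    · rw [hoff hω, hdiff, Pi.sub_apply]
      have hlt : cexpInd F1 F2 P C ω / 2 < cexpInd F1 F2 P D ω := not_le.1 hω
      linarith
  · filter_upwards [hon, hoff, hdiff, hD_pos] with ω hon hoff hdiff hD_pos hCω
    by_cases hω : ω ∈ T
    · exact (hon hω).symm ▸ (hD_pos hCω).1
    · rw [hoff hω, hdiff, Pi.sub_apply]
      linarith [(hD_pos hCω).2]

lemma CondAtomless.exists_subset_cexpInd_le_pow (hle : F1 ≤ F2) (hCA : CondAtomless F1 F2 P)
    (hC : MeasurableSet[F2] C) (n : ℕ) :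
    ∃ C', MeasurableSet[F2] C' ∧ C' ⊆ C ∧
      (∀ᵐ ω ∂P, cexpInd F1 F2 P C' ω ≤ 2⁻¹ ^ n * cexpInd F1 F2 P C ω) ∧
      (∀ᵐ ω ∂P, 0 < cexpInd F1 F2 P C ω → 0 < cexpInd F1 F2 P C' ω) := by
  induction n with
  | zero => exact ⟨C, hC, subset_rfl, .of_forall fun ω => by simp, .of_forall fun ω h => h⟩
  | succ n ih =>
    obtain ⟨C₁, hC₁, hC₁C, hC₁_le, hC₁_pos⟩ := ih
    obtain ⟨C₂, hC₂, hC₂C₁, hC₂_le, hC₂_pos⟩ := hCA.exists_subset_cexpInd_le_half hle hC₁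
    refine ⟨C₂, hC₂, hC₂C₁.trans hC₁C, ?_, ?_⟩
    · filter_upwards [hC₁_le, hC₂_le] with ω h₁ h₂
      rw [pow_succ]
      linarith
    · filter_upwards [hC₁_pos, hC₂_pos] with ω h₁ h₂ hω
      exact h₂ (h₁ hω)

end HalvingFromCondAtomless

section ExactHalving

variable {Ω : Type*} {F1 F2 : MeasurableSpace Ω} {P : @Measure Ω F2} [IsProbabilityMeasure P]
  {A U : Set Ω}

/-- Were the gap `E[1_A | F1] / 2 - E[1_U | F1]` larger than `2⁻ᵏ` on a set `W` of positive
measure, a piece of `A \ U` with conditional expectation at most `2⁻ᵏ`, cut down to `W`, could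
still be added to `U`. -/
lemma CondAtomless.cexpInd_eq_half_of_maximal (hle : F1 ≤ F2) (hCA : CondAtomless F1 F2 P)
    (hA : MeasurableSet[F2] A) (hU : MeasurableSet[F2] U) (hUA : U ⊆ A)
    (hU_le : ∀ᵐ ω ∂P, cexpInd F1 F2 P U ω ≤ cexpInd F1 F2 P A ω / 2)
    (hmax : ∀ D, MeasurableSet[F2] D → D ⊆ A \ U →
      (∀ᵐ ω ∂P, cexpInd F1 F2 P D ω ≤ cexpInd F1 F2 P A ω / 2 - cexpInd F1 F2 P U ω) →
      P D = 0) :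
    ∀ᵐ ω ∂P, cexpInd F1 F2 P U ω = cexpInd F1 F2 P A ω / 2 := by
  set gap : Ω → ℝ := fun ω => cexpInd F1 F2 P A ω / 2 - cexpInd F1 F2 P U ω
  have hgap : Measurable[F1] gap := (measurable_cexpInd.div_const 2).sub measurable_cexpInd
  have hgap_null : ∀ k : ℕ, P {ω | (2⁻¹ : ℝ) ^ k < gap ω} = 0 := by
    intro k
    set W := {ω | (2⁻¹ : ℝ) ^ k < gap ω}
    have hWm : MeasurableSet[F1] W := measurableSet_lt measurable_const hgap
    obtain ⟨C, hC, hCAU, hC_le, hC_pos⟩ :=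
      hCA.exists_subset_cexpInd_le_pow hle (hA.diff hU) k
    have hCW_null : P (C ∩ W) = 0 := by
      refine hmax _ (hC.inter (hle _ hWm)) (inter_subset_left.trans hCAU) ?_
      filter_upwards [cexpInd_inter (P := P) hC hWm, hC_le, cexpInd_le_one hle (hA.diff hU),
        hU_le] with ω hCW hC_le h_one hU_le
      rw [hCW]
      by_cases hω : ω ∈ W
      · rw [indicator_of_mem hω]
        have : (2⁻¹ : ℝ) ^ k * cexpInd F1 F2 P (A \ U) ω ≤ 2⁻¹ ^ k :=
          mul_le_of_le_one_right (by positivity) h_one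
        exact (hC_le.trans this).trans (le_of_lt hω)
      · rw [indicator_of_notMem hω]
        exact sub_nonneg.2 hU_le
    have hC_zero := (measure_inter_eq_zero_iff_cexpInd hle hC hWm).1 hCW_null
    refine measure_eq_zero_iff_ae_notMem.2 ?_
    filter_upwards [hC_zero, hC_pos, cexpInd_diff (F1 := F1) (P := P) hA hU hUA,
      cexpInd_nonneg (F1 := F1) (P := P) (A := A)] with ω hC_zero hC_pos hdiff hA_nonneg hω
    have hω' : (2⁻¹ : ℝ) ^ k < cexpInd F1 F2 P A ω / 2 - cexpInd F1 F2 P U ω := hω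
    have : 0 < cexpInd F1 F2 P (A \ U) ω := by
      rw [hdiff, Pi.sub_apply]
      rw [Pi.zero_apply] at hA_nonneg
      linarith [pow_pos (by norm_num : (0 : ℝ) < 2⁻¹) k]
    exact (hC_pos this).ne' (hC_zero hω)
  have hgap_le : ∀ᵐ ω ∂P, gap ω ≤ 0 := by
    filter_upwards [measure_eq_zero_iff_ae_notMem.1 (measure_iUnion_null hgap_null)] with ω hω
    by_contra! hpos
    obtain ⟨k, hk⟩ := exists_pow_lt_of_lt_one hpos (by norm_num : (2⁻¹ : ℝ) < 1)
    exact hω (mem_iUnion.2 ⟨k, hk⟩)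
  filter_upwards [hU_le, hgap_le] with ω h₁ h₂
  exact le_antisymm h₁ (sub_nonpos.1 h₂)

lemma CondAtomless.exists_subset_cexpInd_eq_half (hle : F1 ≤ F2) (hCA : CondAtomless F1 F2 P)
    (hA : MeasurableSet[F2] A) :
    ∃ H, MeasurableSet[F2] H ∧ H ⊆ A ∧
      ∀ᵐ ω ∂P, cexpInd F1 F2 P H ω = cexpInd F1 F2 P A ω / 2 := by
  have hgreedy := exists_seq_greedy P
    (fun U => MeasurableSet[F2] U ∧ U ⊆ A ∧
      ∀ᵐ ω ∂P, cexpInd F1 F2 P U ω ≤ cexpInd F1 F2 P A ω / 2)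
    (fun U C => MeasurableSet[F2] C ∧ C ⊆ A \ U ∧
      ∀ᵐ ω ∂P, cexpInd F1 F2 P C ω ≤ cexpInd F1 F2 P A ω / 2 - cexpInd F1 F2 P U ω)
    ?inv_empty ?adm_empty ?inv_union ?inv_iUnion (fun _ _ h => h.1)
    (fun _ _ h => disjoint_of_subset_right h.2.1 disjoint_sdiff_right) ?adm_anti
  · obtain ⟨C, -, ⟨hU, hUA, hU_le⟩, hmax⟩ := hgreedy
    exact ⟨_, hU, hUA, hCA.cexpInd_eq_half_of_maximal hle hA hU hUA hU_le
        fun D hD hDAU hD_le => hmax D ⟨hD, hDAU, hD_le⟩⟩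
  case inv_empty =>
    refine ⟨.empty, empty_subset _, ?_⟩
    filter_upwards [cexpInd_nonneg (F1 := F1) (P := P) (A := A)] with ω hω
    simp only [cexpInd_empty, Pi.zero_apply] at hω ⊢
    linarith
  case adm_empty =>
    rintro U ⟨-, -, hU_le⟩
    refine ⟨.empty, empty_subset _, ?_⟩
    filter_upwards [hU_le] with ω hω
    simp only [cexpInd_empty, Pi.zero_apply]
    linarith
  case inv_union =>
    rintro U D ⟨hU, hUA, hU_le⟩ ⟨hD, hDAU, hD_le⟩
    refine ⟨hU.union hD, union_subset hUA (hDAU.trans sdiff_subset), ?_⟩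
    filter_upwards [cexpInd_union (F1 := F1) (P := P) hU hD
      (disjoint_of_subset_right hDAU disjoint_sdiff_right), hU_le, hD_le] with ω h hU_le hD_le
    rw [h, Pi.add_apply]
    linarith
  case inv_iUnion =>
    intro U hmono hU
    exact ⟨.iUnion fun n => (hU n).1, iUnion_subset fun n => (hU n).2.1,
      cexpInd_iUnion_le hle (fun n => (hU n).1) hmono (integrable_cexpInd.div_const 2)
        fun n => (hU n).2.2⟩
  case adm_anti =>
    rintro U V D ⟨hU, -, -⟩ ⟨hV, -, -⟩ hUV ⟨hD, hDAV, hD_le⟩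
    refine ⟨hD, hDAV.trans (sdiff_subset_sdiff_right hUV), ?_⟩
    filter_upwards [hD_le, cexpInd_mono (F1 := F1) (P := P) hU hV hUV] with ω h₁ h₂
    linarith

end ExactHalving

section Forward

variable {Ω : Type*} {F1 F2 : MeasurableSpace Ω} {P : @Measure Ω F2}

lemma cexpInd_splitTree [IsFiniteMeasure P] (hle : F1 ≤ F2) {h : Set Ω → Set Ω}
    (hh : ∀ A, MeasurableSet[F2] A → MeasurableSet[F2] (h A) ∧ h A ⊆ A ∧
      ∀ᵐ ω ∂P, cexpInd F1 F2 P (h A) ω = cexpInd F1 F2 P A ω / 2) (s : List Bool) :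
    MeasurableSet[F2] (splitTree h s) ∧
      cexpInd F1 F2 P (splitTree h s) =ᵐ[P] fun _ => 2⁻¹ ^ s.length := by
  induction s with
  | nil =>
    refine ⟨.univ, .of_eq ?_⟩
    rw [splitTree, cexpInd_univ hle, List.length_nil, pow_zero]
    rfl
  | cons b s ih =>
    obtain ⟨hX, hX_ce⟩ := ih
    obtain ⟨hH, hHX, hH_ce⟩ := hh _ hX
    cases b
    · refine ⟨hX.inter hH, ?_⟩
      simp only [splitTree, Bool.false_eq_true, ↓reduceIte, inter_eq_right.2 hHX]
      filter_upwards [hH_ce, hX_ce] with ω h₁ h₂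
      rw [h₁, h₂, List.length_cons, pow_succ]
      ring
    · refine ⟨hX.diff hH, ?_⟩
      simp only [splitTree, ↓reduceIte]
      filter_upwards [cexpInd_diff (F1 := F1) (P := P) hX hH hHX, hH_ce, hX_ce] with ω h₀ h₁ h₂
      rw [h₀, Pi.sub_apply, h₁, h₂, List.length_cons, pow_succ]
      ring

theorem CondAtomless.exists_indep_atomlessOn [IsProbabilityMeasure P] (hle : F1 ≤ F2)
    (hCA : CondAtomless F1 F2 P) :
    ∃ B : MeasurableSpace Ω, B ≤ F2 ∧ Indep B F1 P ∧ AtomlessOn B P := by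
  choose! h hh using fun A (hA : MeasurableSet[F2] A) => hCA.exists_subset_cexpInd_eq_half hle hA
  have hT := cexpInd_splitTree hle hh
  have hT_inter : ∀ s F, MeasurableSet[F1] F →
      P (splitTree h s ∩ F) = 2⁻¹ ^ s.length * P F := by
    intro s F hF
    rw [measure_inter_eq_of_cexpInd_eq_const hle (hT s).1 (hT s).2 hF,
      ENNReal.ofReal_pow (by norm_num), ENNReal.ofReal_inv_of_pos two_pos, ENNReal.ofReal_ofNat]
  have hT_meas : ∀ s, P (splitTree h s) = 2⁻¹ ^ s.length := fun s => by
    simpa using hT_inter s univ .univ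
  have hB : MeasurableSpace.generateFrom (range (splitTree h)) ≤ F2 :=
    MeasurableSpace.generateFrom_le (by rintro _ ⟨s, rfl⟩; exact (hT s).1)
  refine ⟨_, hB, ?_, atomlessOn_generateFrom_splitTree fun s => (hT_meas s).le⟩
  refine IndepSets.indep hB hle isPiSystem_range_splitTree
    (@MeasurableSpace.isPiSystem_measurableSet Ω F1) rfl
    (@MeasurableSpace.generateFrom_measurableSet Ω F1).symm ?_
  rw [IndepSets_iff]
  rintro _ F ⟨s, rfl⟩ hF
  rw [hT_inter s F hF, hT_meas s]

end Forward

section Reverse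

variable {Ω : Type*} {F1 F2 : MeasurableSpace Ω} {P : @Measure Ω F2} {A W : Set Ω}

/-- The `D i` are glued along the disjointed `F1`-measurable sets on which they work; there the
glued set has the same conditional expectation as `D i`, by `cexpInd_eq_of_inter_eq`. -/
lemma exists_subset_cexpInd_pos_lt_of_ae_exists [IsFiniteMeasure P] (hle : F1 ≤ F2)
    {D : ℕ → Set Ω} (hD : ∀ i, MeasurableSet[F2] (D i))
    (hDA : ∀ i, D i ⊆ A)
    (hex : ∀ᵐ ω ∂P, 0 < cexpInd F1 F2 P A ω →
      ∃ i, 0 < cexpInd F1 F2 P (D i) ω ∧ cexpInd F1 F2 P (D i) ω < cexpInd F1 F2 P A ω) :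
    ∃ B, MeasurableSet[F2] B ∧ B ⊆ A ∧ ∀ᵐ ω ∂P, 0 < cexpInd F1 F2 P A ω →
      0 < cexpInd F1 F2 P B ω ∧ cexpInd F1 F2 P B ω < cexpInd F1 F2 P A ω := by
  set S : ℕ → Set Ω := fun i =>
    {ω | 0 < cexpInd F1 F2 P (D i) ω ∧ cexpInd F1 F2 P (D i) ω < cexpInd F1 F2 P A ω}
  have hS : ∀ i, MeasurableSet[F1] (S i) := fun i =>
    (measurableSet_lt measurable_const measurable_cexpInd).inter
      (measurableSet_lt measurable_cexpInd measurable_cexpInd)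
  set E := disjointed S
  have hE : ∀ i, MeasurableSet[F1] (E i) := MeasurableSet.disjointed hS
  have hB : MeasurableSet[F2] (⋃ i, D i ∩ E i) := .iUnion fun i => (hD i).inter (hle _ (hE i))
  have hBE : ∀ i, (⋃ j, D j ∩ E j) ∩ E i = D i ∩ E i := fun i => by
    ext ω
    simp only [mem_inter_iff, mem_iUnion]
    constructor
    · rintro ⟨⟨j, hDj, hEj⟩, hEi⟩
      obtain rfl : j = i := (disjoint_disjointed S).eq (not_disjoint_iff.2 ⟨ω, hEj, hEi⟩)
      exact ⟨hDj, hEi⟩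
    · rintro ⟨hDi, hEi⟩
      exact ⟨⟨i, hDi, hEi⟩, hEi⟩
  refine ⟨⋃ i, D i ∩ E i, hB, iUnion_subset fun i => inter_subset_left.trans (hDA i), ?_⟩
  have hloc := ae_all_iff.2 fun i => cexpInd_eq_of_inter_eq (P := P) hB (hD i) (hE i) (hBE i)
  filter_upwards [hex, hloc] with ω hex hloc hpos
  obtain ⟨i, hi⟩ := mem_iUnion.1 ((iUnion_disjointed (f := S)).symm ▸ mem_iUnion.2 (hex hpos))
  rw [hloc i hi]
  exact disjointed_subset S i hi

/-- Up to a null set, `A ∩ W` lies in the part of `W` where some cell contains all of `A`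
conditionally on `F1`; by independence, the piece `V` of `W` attached to `C j` meets `A` in
measure at most `P (C j) * P V ≤ ε * P V`. -/
lemma measure_inter_le_of_cover [IsProbabilityMeasure P] (hle : F1 ≤ F2) {B : MeasurableSpace Ω}
    (hB : B ≤ F2) (hind : Indep B F1 P) (hA : MeasurableSet[F2] A) {C : ℕ → Set Ω}
    (hC : ∀ j, MeasurableSet[B] (C j)) (hcover : P (⋃ j, C j)ᶜ = 0) {ε : ℝ≥0∞}
    (hCε : ∀ j, P (C j) ≤ ε) (hW : MeasurableSet[F1] W)
    (hdich : ∀ᵐ ω ∂P, ω ∈ W → ∀ j, cexpInd F1 F2 P (A ∩ C j) ω = 0 ∨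
      cexpInd F1 F2 P A ω ≤ cexpInd F1 F2 P (A ∩ C j) ω) :
    P (A ∩ W) ≤ ε := by
  have hAC : ∀ j, MeasurableSet[F2] (A ∩ C j) := fun j => hA.inter (hB _ (hC j))
  set T : ℕ → Set Ω := fun j => W ∩ {ω | cexpInd F1 F2 P A ω ≤ cexpInd F1 F2 P (A ∩ C j) ω}
  have hT : ∀ j, MeasurableSet[F1] (T j) := fun j =>
    hW.inter (measurableSet_le measurable_cexpInd measurable_cexpInd)
  set V := disjointed T
  have hV : ∀ j, MeasurableSet[F1] (V j) := MeasurableSet.disjointed hT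
  set R := W \ ⋃ j, T j
  have hR : MeasurableSet[F1] R := hW.diff (.iUnion hT)
  have hAR : P (A ∩ R) = 0 := by
    refine measure_mono_null (t := (⋃ j, C j)ᶜ ∪ ⋃ j, A ∩ C j ∩ R) ?_
      (measure_union_null hcover (measure_iUnion_null fun j => ?_))
    · rintro ω ⟨hωA, hωR⟩
      by_cases hω : ω ∈ ⋃ j, C j
      · obtain ⟨j, hj⟩ := mem_iUnion.1 hω
        exact .inr (mem_iUnion.2 ⟨j, ⟨hωA, hj⟩, hωR⟩)
      · exact .inl hω
    · refine (measure_inter_eq_zero_iff_cexpInd hle (hAC j) hR).2 ?_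
      filter_upwards [hdich] with ω hdich hωR
      exact (hdich hωR.1 j).resolve_right fun hAle => hωR.2 (mem_iUnion.2 ⟨j, hωR.1, hAle⟩)
  have hAV : ∀ j, P (A ∩ V j) ≤ ε * P (V j) := fun j =>
    calc P (A ∩ V j) ≤ P (A ∩ C j ∩ V j) :=
          measure_inter_le_of_cexpInd_le hle hA (hAC j) (hV j) (.of_forall fun ω hω =>
            (disjointed_subset T j hω).2)
      _ ≤ P (C j ∩ V j) := measure_mono (inter_subset_inter_left _ inter_subset_right)
      _ = P (C j) * P (V j) := (Indep_iff B F1 P).1 hind _ _ (hC j) (hV j)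
      _ ≤ ε * P (V j) := by gcongr; exact hCε j
  have hsplit : A ∩ W ⊆ (A ∩ R) ∪ ⋃ j, A ∩ V j := by
    rintro ω ⟨hωA, hωW⟩
    by_cases hω : ω ∈ ⋃ j, T j
    · rw [← iUnion_disjointed] at hω
      obtain ⟨j, hj⟩ := mem_iUnion.1 hω
      exact .inr (mem_iUnion.2 ⟨j, hωA, hj⟩)
    · exact .inl ⟨hωA, hωW, hω⟩
  calc P (A ∩ W) ≤ P (A ∩ R) + ∑' j, P (A ∩ V j) := (measure_mono hsplit).trans
        ((measure_union_le _ _).trans (by gcongr; exact measure_iUnion_le _))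
    _ ≤ ∑' j, ε * P (V j) := by rw [hAR, zero_add]; exact ENNReal.tsum_le_tsum hAV
    _ = ε * P (⋃ j, V j) := by
        rw [ENNReal.tsum_mul_left, measure_iUnion (disjoint_disjointed T) fun j => hle _ (hV j)]
    _ ≤ ε * 1 := by gcongr; exact prob_le_one
    _ = ε := mul_one ε

lemma ae_exists_cexpInd_inter_pos_lt [IsProbabilityMeasure P] (hle : F1 ≤ F2)
    {B : MeasurableSpace Ω} (hB : B ≤ F2) (hind : Indep B F1 P) (hA : MeasurableSet[F2] A)
    {C : ℕ → ℕ → Set Ω} (hC : ∀ N j, MeasurableSet[B] (C N j) ∧ P (C N j) ≤ 2⁻¹ ^ N)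
    (hcover : ∀ N, P (⋃ j, C N j)ᶜ = 0) :
    ∀ᵐ ω ∂P, 0 < cexpInd F1 F2 P A ω → ∃ N j, 0 < cexpInd F1 F2 P (A ∩ C N j) ω ∧
      cexpInd F1 F2 P (A ∩ C N j) ω < cexpInd F1 F2 P A ω := by
  set W := {ω | 0 < cexpInd F1 F2 P A ω} ∩ ⋂ N, ⋂ j, {ω | 0 < cexpInd F1 F2 P (A ∩ C N j) ω ∧
    cexpInd F1 F2 P (A ∩ C N j) ω < cexpInd F1 F2 P A ω}ᶜ
  have hW : MeasurableSet[F1] W :=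
    (measurableSet_lt measurable_const measurable_cexpInd).inter (.iInter fun N => .iInter fun j =>
      ((measurableSet_lt measurable_const measurable_cexpInd).inter
        (measurableSet_lt measurable_cexpInd measurable_cexpInd)).compl)
  have hAW_le : ∀ N : ℕ, P (A ∩ W) ≤ 2⁻¹ ^ N := by
    intro N
    refine measure_inter_le_of_cover hle hB hind hA (fun j => (hC N j).1) (hcover N)
      (fun j => (hC N j).2) hW ?_
    filter_upwards [ae_all_iff.2 fun j => cexpInd_nonneg (F1 := F1) (P := P) (A := A ∩ C N j)]
      with ω hnonneg hωW j
    have hbad := mem_iInter.1 (mem_iInter.1 hωW.2 N) j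
    rcases (hnonneg j).eq_or_lt with h0 | hpos
    · exact .inl h0.symm
    · exact .inr (not_lt.1 fun hlt => hbad ⟨hpos, hlt⟩)
  have hAW : P (A ∩ W) = 0 := by
    by_contra hne
    obtain ⟨N, hN⟩ := ENNReal.exists_inv_two_pow_lt hne
    exact (hAW_le N).not_gt hN
  have hW_null : P W = 0 := by
    refine measure_eq_zero_iff_ae_notMem.2 ?_
    filter_upwards [(measure_inter_eq_zero_iff_cexpInd hle hA hW).1 hAW] with ω hω hωW
    exact (hωW.1 : 0 < cexpInd F1 F2 P A ω).ne' (hω hωW)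
  filter_upwards [measure_eq_zero_iff_ae_notMem.1 hW_null] with ω hω hpos
  by_contra! h
  exact hω ⟨hpos, mem_iInter.2 fun N => mem_iInter.2 fun j hj => (h N j hj.1).not_gt hj.2⟩

end Reverse

theorem AtomlessOn.condAtomless {Ω : Type*} {F1 F2 B : MeasurableSpace Ω} {P : @Measure Ω F2}
    [IsProbabilityMeasure P] (hle : F1 ≤ F2) (hB : B ≤ F2) (hind : Indep B F1 P)
    (hatom : AtomlessOn B P) : CondAtomless F1 F2 P := by
  intro A hA
  choose C hC hcover using fun N : ℕ =>
    hatom.exists_cover_measure_le hB (ε := 2⁻¹ ^ N) (by simp)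
  refine exists_subset_cexpInd_pos_lt_of_ae_exists hle
    (D := fun n => A ∩ C n.unpair.1 n.unpair.2) (fun n => hA.inter (hB _ (hC _ _).1))
    (fun n => inter_subset_left) ?_
  filter_upwards [ae_exists_cexpInd_inter_pos_lt hle hB hind hA hC hcover] with ω hω hpos
  obtain ⟨N, j, hNj⟩ := hω hpos
  exact ⟨Nat.pair N j, by simpa only [Nat.unpair_pair] using hNj⟩

theorem stmt5 {Ω : Type*} (F1 F2 : MeasurableSpace Ω) (hle : F1 ≤ F2)
    (P : @Measure Ω F2) (hP : @IsProbabilityMeasure Ω F2 P) :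
    CondAtomless F1 F2 P ↔
      ∃ B : MeasurableSpace Ω, B ≤ F2 ∧ ProbabilityTheory.Indep B F1 P ∧
        ∀ G : Set Ω, MeasurableSet[B] G → 0 < P G →
          ∃ H : Set Ω, MeasurableSet[B] H ∧ H ⊆ G ∧ 0 < P H ∧ P H < P G :=
  ⟨fun hCA => hCA.exists_indep_atomlessOn hle,
    fun ⟨_, hB, hind, hatom⟩ => AtomlessOn.condAtomless hle hB hind hatom⟩
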